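/- arXiv:1408.6394 — 5 statements merged into one kernel-verified Lean document; each statement's English description precedes it below -/
import Mathlib

section
/- Let Ω ⊆ ℝ be open, F ∈ C¹(Ω) with Ω forward invariant under F, h ∈ C(Ω) with F' and Re h bounded on Ω, 1 ≤ p < ∞, and ρ p-admissible for F and h. For x ∈ Ω define ρ_{−t,p}(x) = exp(−p ∫₀ᵗ Re h(φ(s,x)) ds) exp(∫₀ᵗ F'(φ(s,x)) ds) ρ(φ(t,x)). Fix x ∈ Ω with F(x) ≠ 0 and t₀ > 0. Then ∫₀^∞ ρ_{−t,p}(x) dt < ∞ if and only if ∑_{k=0}^∞ ρ_{−k t₀, p}(x) < ∞. -/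
open Set MeasureTheory

/-- Under boundedness of `F'` and `Re h` on `Ω` and `p`-admissibility of
`ρ`, for `x ∈ Ω` with `F(x) ≠ 0` and `t₀ > 0`:
`∫₀^∞ ρ_{−t,p}(x) dt < ∞` iff `∑_{k≥0} ρ_{−k t₀,p}(x) < ∞`, where
`ρ_{−t,p}(x) = exp(−p ∫₀ᵗ Re h(φ(s,x)) ds) exp(∫₀ᵗ F'(φ(s,x)) ds) ρ(φ(t,x))`. -/
theorem integral_iff_summable (Ω : Set ℝ) (hΩ : IsOpen Ω)
    (F : ℝ → ℝ) (hF : ContDiffOn ℝ 1 F Ω) (hF'c : ContinuousOn (deriv F) Ω)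
    (h : ℝ → ℂ) (hh : ContinuousOn h Ω)
    (ρ : ℝ → ℝ) (hρm : Measurable ρ) (hρpos : ∀ y ∈ Ω, 0 < ρ y)
    (p : ℝ) (hp : 1 ≤ p)
    (φ : ℝ → ℝ → ℝ)
    (hφ0 : ∀ y ∈ Ω, φ 0 y = y)
    (hφΩ : ∀ y ∈ Ω, ∀ t : ℝ, 0 ≤ t → φ t y ∈ Ω)
    (hφ' : ∀ y ∈ Ω, ∀ t : ℝ, 0 ≤ t → HasDerivAt (fun s => φ s y) (F (φ t y)) t)
    (hsemi : ∀ y ∈ Ω, ∀ s t : ℝ, 0 ≤ s → 0 ≤ t → φ (t + s) y = φ t (φ s y))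
    -- boundedness of `F'` and `Re h` on `Ω`
    (hbF' : ∃ M : ℝ, ∀ y ∈ Ω, |deriv F y| ≤ M)
    (hbh : ∃ M : ℝ, ∀ y ∈ Ω, |(h y).re| ≤ M)
    -- `ρ` is `p`-admissible for `F` and `h`
    (hadm : ∃ M : ℝ, 1 ≤ M ∧ ∃ ω : ℝ, ∀ t : ℝ, 0 ≤ t → ∀ y ∈ Ω,
      Real.exp (p * ∫ s in (0:ℝ)..t, (h (φ s y)).re) * ρ y ≤
        M * Real.exp (ω * t) * ρ (φ t y) * Real.exp (∫ s in (0:ℝ)..t, deriv F (φ s y)))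
    (x : ℝ) (hx : x ∈ Ω) (hFx : F x ≠ 0) (t₀ : ℝ) (ht₀ : 0 < t₀) :
    IntegrableOn (fun t : ℝ =>
        Real.exp (-(p * ∫ s in (0:ℝ)..t, (h (φ s x)).re)) *
          Real.exp (∫ s in (0:ℝ)..t, deriv F (φ s x)) * ρ (φ t x)) (Ici 0) volume ↔
      Summable (fun k : ℕ =>
        Real.exp (-(p * ∫ s in (0:ℝ)..(k * t₀ : ℝ), (h (φ s x)).re)) *
          Real.exp (∫ s in (0:ℝ)..(k * t₀ : ℝ), deriv F (φ s x)) * ρ (φ (k * t₀) x)) := by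
  obtain ⟨M, hM1, ω, hadm⟩ := hadm
  have hcm : ∀ t : ℝ, 0 ≤ t → φ t x ∈ Ω := fun t ht => hφΩ x hx t ht
  have hccont : ContinuousOn (fun t => φ t x) (Ici 0) := fun t ht =>
    ((hφ' x hx t ht).continuousAt).continuousWithinAt
  have hhre : ContinuousOn (fun y => (h y).re) Ω := Complex.continuous_re.comp_continuousOn hh
  -- interval integrability helper
  have hII : ∀ (f : ℝ → ℝ), ContinuousOn f Ω → ∀ a b : ℝ, 0 ≤ a → 0 ≤ b →
      IntervalIntegrable (fun t => f (φ t x)) volume a b := by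
    intro f hf a b ha hb
    apply ContinuousOn.intervalIntegrable
    have hsub : uIcc a b ⊆ Ici 0 := fun t ht => le_trans (le_min ha hb) ht.1
    exact hf.comp (hccont.mono hsub) (fun t ht => hcm t (hsub ht))
  -- additivity of primitives along the flow
  have hadd : ∀ (f : ℝ → ℝ), ContinuousOn f Ω → ∀ a b : ℝ, 0 ≤ a → a ≤ b →
      (∫ s in (0:ℝ)..b, f (φ s x)) =
        (∫ s in (0:ℝ)..a, f (φ s x)) + ∫ r in (0:ℝ)..(b - a), f (φ r (φ a x)) := by
    intro f hf a b ha hab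
    have hb : 0 ≤ b := ha.trans hab
    have h1 : (∫ s in (0:ℝ)..a, f (φ s x)) + (∫ s in a..b, f (φ s x))
        = ∫ s in (0:ℝ)..b, f (φ s x) :=
      intervalIntegral.integral_add_adjacent_intervals (hII f hf 0 a le_rfl ha)
        (hII f hf a b ha hb)
    have h2 : (∫ r in (0:ℝ)..(b - a), f (φ (r + a) x)) = ∫ s in a..b, f (φ s x) := by
      simpa using intervalIntegral.integral_comp_add_right (a := (0:ℝ)) (b := b - a)
        (fun s => f (φ s x)) a
    have h3 : (∫ r in (0:ℝ)..(b - a), f (φ (r + a) x))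
        = ∫ r in (0:ℝ)..(b - a), f (φ r (φ a x)) := by
      apply intervalIntegral.integral_congr
      intro r hr
      have hr0 : 0 ≤ r := by
        rcases Set.mem_uIcc.mp hr with hh' | hh'
        · exact hh'.1
        · linarith [hh'.1, hh'.2, sub_nonneg.mpr hab]
      simp only [hsemi x hx a r ha hr0]
    rw [← h1, ← h2, h3]
  set A : ℝ → ℝ := fun t => ∫ s in (0:ℝ)..t, (h (φ s x)).re with hA
  set B : ℝ → ℝ := fun t => ∫ s in (0:ℝ)..t, deriv F (φ s x) with hB
  set g : ℝ → ℝ := fun t => Real.exp (-(p * A t)) * Real.exp (B t) * ρ (φ t x) with hg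
  show IntegrableOn g (Ici 0) volume ↔ Summable fun k : ℕ => g ((k : ℝ) * t₀)
  have hMpos : (0:ℝ) < M := lt_of_lt_of_le one_pos hM1
  set K : ℝ := M * Real.exp (|ω| * t₀) with hK
  have hKpos : 0 < K := by positivity
  have hgpos : ∀ t : ℝ, 0 ≤ t → 0 < g t := by
    intro t ht
    have := hρpos _ (hcm t ht)
    simp only [hg]
    positivity
  -- key comparison lemma
  have key : ∀ a b : ℝ, 0 ≤ a → a ≤ b → b ≤ a + t₀ → g a ≤ K * g b := by
    intro a b ha hab hbt
    have hs0 : 0 ≤ b - a := sub_nonneg.mpr hab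
    have hyΩ : φ a x ∈ Ω := hcm a ha
    have hAab : A b = A a + ∫ r in (0:ℝ)..(b - a), (h (φ r (φ a x))).re :=
      hadd _ hhre a b ha hab
    have hBab : B b = B a + ∫ r in (0:ℝ)..(b - a), deriv F (φ r (φ a x)) :=
      hadd _ hF'c a b ha hab
    have hcb : φ b x = φ (b - a) (φ a x) := by
      rw [← hsemi x hx a (b - a) ha hs0]
      congr 1
      ring
    set Ih := ∫ r in (0:ℝ)..(b - a), (h (φ r (φ a x))).re with hIh
    set If := ∫ r in (0:ℝ)..(b - a), deriv F (φ r (φ a x)) with hIf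
    have had := hadm (b - a) hs0 (φ a x) hyΩ
    have hrpos : 0 < ρ (φ (b - a) (φ a x)) := hρpos _ (hφΩ _ hyΩ _ hs0)
    have h1 : ρ (φ a x) ≤ (M * Real.exp (ω * (b - a))) *
        (Real.exp (-(p * Ih)) * Real.exp If * ρ (φ (b - a) (φ a x))) := by
      have e1 : Real.exp (-(p * Ih)) * (Real.exp (p * Ih) * ρ (φ a x)) = ρ (φ a x) := by
        rw [← mul_assoc, ← Real.exp_add]
        simp
      calc ρ (φ a x) = Real.exp (-(p * Ih)) * (Real.exp (p * Ih) * ρ (φ a x)) := e1.symm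
        _ ≤ Real.exp (-(p * Ih)) *
            (M * Real.exp (ω * (b - a)) * ρ (φ (b - a) (φ a x)) * Real.exp If) :=
          mul_le_mul_of_nonneg_left had (Real.exp_nonneg _)
        _ = (M * Real.exp (ω * (b - a))) *
            (Real.exp (-(p * Ih)) * Real.exp If * ρ (φ (b - a) (φ a x))) := by ring
    have h2 : M * Real.exp (ω * (b - a)) ≤ K := by
      have hωs : ω * (b - a) ≤ |ω| * t₀ := by
        calc ω * (b - a) ≤ |ω| * (b - a) := mul_le_mul_of_nonneg_right (le_abs_self ω) hs0
          _ ≤ |ω| * t₀ := mul_le_mul_of_nonneg_left (by linarith) (abs_nonneg ω)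
      exact mul_le_mul_of_nonneg_left (Real.exp_le_exp.mpr hωs) hMpos.le
    have hXpos : 0 < Real.exp (-(p * Ih)) * Real.exp If * ρ (φ (b - a) (φ a x)) := by
      positivity
    have h3 : ρ (φ a x) ≤ K * (Real.exp (-(p * Ih)) * Real.exp If * ρ (φ (b - a) (φ a x))) :=
      h1.trans (mul_le_mul_of_nonneg_right h2 hXpos.le)
    have hgb : g b = Real.exp (-(p * A a)) * Real.exp (B a) *
        (Real.exp (-(p * Ih)) * Real.exp If * ρ (φ (b - a) (φ a x))) := by
      simp only [hg, hAab, hBab, hcb, ← hIh, ← hIf]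
      rw [mul_add, neg_add, Real.exp_add, Real.exp_add]
      ring
    have hga : g a = Real.exp (-(p * A a)) * Real.exp (B a) * ρ (φ a x) := rfl
    rw [hga, hgb]
    calc Real.exp (-(p * A a)) * Real.exp (B a) * ρ (φ a x)
        ≤ Real.exp (-(p * A a)) * Real.exp (B a) *
          (K * (Real.exp (-(p * Ih)) * Real.exp If * ρ (φ (b - a) (φ a x)))) := by
          apply mul_le_mul_of_nonneg_left h3
          positivity
      _ = K * (Real.exp (-(p * A a)) * Real.exp (B a) *
          (Real.exp (-(p * Ih)) * Real.exp If * ρ (φ (b - a) (φ a x)))) := by ring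
  -- continuity of the primitives on `Ici 0`
  have hprim : ∀ (f : ℝ → ℝ), ContinuousOn f Ω →
      ContinuousOn (fun t => ∫ s in (0:ℝ)..t, f (φ s x)) (Ici 0) := by
    intro f hf t ht
    have ht0 : (0:ℝ) ≤ t := ht
    have hIcc : ContinuousOn (fun t => ∫ s in (0:ℝ)..t, f (φ s x)) (uIcc (0:ℝ) (t + 1)) :=
      intervalIntegral.continuousOn_primitive_interval'
        (hII f hf 0 (t + 1) le_rfl (by linarith)) left_mem_uIcc
    have huIcc : uIcc (0:ℝ) (t + 1) = Icc (0:ℝ) (t + 1) := uIcc_of_le (by linarith)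
    have h1 : ContinuousWithinAt (fun t => ∫ s in (0:ℝ)..t, f (φ s x)) (Icc 0 (t + 1)) t := by
      rw [huIcc] at hIcc
      exact hIcc t ⟨ht0, by linarith⟩
    apply h1.mono_of_mem_nhdsWithin
    apply Filter.mem_of_superset (inter_mem_nhdsWithin (Ici 0) (Iio_mem_nhds (lt_add_one t)))
    exact fun u hu => ⟨hu.1, hu.2.le⟩
  have hAcont : ContinuousOn A (Ici 0) := hprim _ hhre
  have hBcont : ContinuousOn B (Ici 0) := hprim _ hF'c
  have hgae : AEMeasurable g (volume.restrict (Ici 0)) := by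
    have hE : ContinuousOn (fun t => Real.exp (-(p * A t)) * Real.exp (B t)) (Ici 0) := by
      apply ContinuousOn.mul
      · exact Real.continuous_exp.comp_continuousOn ((hAcont.const_smul p).neg)
      · exact Real.continuous_exp.comp_continuousOn hBcont
    have h2 : AEMeasurable (fun t => ρ (φ t x)) (volume.restrict (Ici 0)) :=
      hρm.comp_aemeasurable (hccont.aemeasurable measurableSet_Ici)
    exact (hE.aemeasurable measurableSet_Ici).mul h2
  -- block decomposition
  set S : ℕ → Set ℝ := fun k => Ico ((k : ℝ) * t₀) (((k : ℝ) + 1) * t₀) with hS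
  have hSm : ∀ k, MeasurableSet (S k) := fun k => measurableSet_Ico
  have hU : (⋃ k, S k) = Ici 0 := by
    ext t
    simp only [mem_iUnion, mem_Ici, hS, mem_Ico]
    constructor
    · rintro ⟨k, h1, _⟩
      have : (0:ℝ) ≤ (k : ℝ) := Nat.cast_nonneg k
      nlinarith
    · intro ht
      refine ⟨⌊t / t₀⌋₊, ?_, ?_⟩
      · have h1 : (⌊t / t₀⌋₊ : ℝ) ≤ t / t₀ := Nat.floor_le (by positivity)
        calc (⌊t / t₀⌋₊ : ℝ) * t₀ ≤ (t / t₀) * t₀ := mul_le_mul_of_nonneg_right h1 ht₀.le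
          _ = t := by field_simp
      · have h1 : t / t₀ < (⌊t / t₀⌋₊ : ℝ) + 1 := Nat.lt_floor_add_one _
        calc t = (t / t₀) * t₀ := by field_simp
          _ < ((⌊t / t₀⌋₊ : ℝ) + 1) * t₀ := mul_lt_mul_of_pos_right h1 ht₀
  have hdisj : Pairwise (Function.onFun Disjoint S) := by
    have haux : ∀ i j : ℕ, i < j → Disjoint (S i) (S j) := by
      intro i j hij
      rw [Set.disjoint_left]
      rintro a ⟨_, ha2⟩ ⟨hb1, _⟩
      have h1 : ((i : ℝ) + 1) ≤ (j : ℝ) := by exact_mod_cast hij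
      nlinarith
    intro i j hij
    rcases hij.lt_or_gt with hlt | hlt
    · exact haux i j hlt
    · exact (haux j i hlt).symm
  have hdecomp : (∫⁻ t in Ici 0, ENNReal.ofReal (g t))
      = ∑' k, ∫⁻ t in S k, ENNReal.ofReal (g t) := by
    rw [← hU, lintegral_iUnion hSm hdisj]
  have hvol : ∀ k : ℕ, volume (S k) = ENNReal.ofReal t₀ := by
    intro k
    rw [hS]
    simp only [Real.volume_Ico]
    congr 1
    ring
  have hnn : 0 ≤ᵐ[volume.restrict (Ici 0)] g :=
    (ae_restrict_iff' measurableSet_Ici).mpr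
      (Filter.Eventually.of_forall fun t ht => (hgpos t ht).le)
  constructor
  · -- integrable → summable
    intro hint
    have hfin : (∫⁻ t in Ici 0, ENNReal.ofReal (g t)) < ⊤ :=
      (hasFiniteIntegral_iff_ofReal hnn).mp hint.2
    rw [hdecomp] at hfin
    have hlow : ∀ k : ℕ, ENNReal.ofReal (K⁻¹ * g ((k : ℝ) * t₀) * t₀)
        ≤ ∫⁻ t in S k, ENNReal.ofReal (g t) := by
      intro k
      have hk0 : (0:ℝ) ≤ (k : ℝ) * t₀ := by positivity
      have hstep : (∫⁻ t in S k, ENNReal.ofReal (K⁻¹ * g ((k : ℝ) * t₀)))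
          ≤ ∫⁻ t in S k, ENNReal.ofReal (g t) := by
        apply lintegral_mono_ae
        rw [ae_restrict_iff' (hSm k)]
        apply Filter.Eventually.of_forall
        intro t ht
        apply ENNReal.ofReal_le_ofReal
        have ht0 : (0:ℝ) ≤ t := le_trans hk0 ht.1
        have hkey : g ((k : ℝ) * t₀) ≤ K * g t :=
          key ((k : ℝ) * t₀) t hk0 ht.1 (by nlinarith [ht.2])
        calc K⁻¹ * g ((k : ℝ) * t₀) ≤ K⁻¹ * (K * g t) :=
            mul_le_mul_of_nonneg_left hkey (by positivity)
          _ = g t := by field_simp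
      calc ENNReal.ofReal (K⁻¹ * g ((k : ℝ) * t₀) * t₀)
          = ENNReal.ofReal (K⁻¹ * g ((k : ℝ) * t₀)) * ENNReal.ofReal t₀ := by
            rw [← ENNReal.ofReal_mul]
            have := hgpos ((k : ℝ) * t₀) hk0
            positivity
        _ = ENNReal.ofReal (K⁻¹ * g ((k : ℝ) * t₀)) * volume (S k) := by rw [hvol k]
        _ = ∫⁻ _ in S k, ENNReal.ofReal (K⁻¹ * g ((k : ℝ) * t₀)) :=
            (setLIntegral_const _ _).symm
        _ ≤ ∫⁻ t in S k, ENNReal.ofReal (g t) := hstep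
    have hsum' : (∑' k : ℕ, ENNReal.ofReal (K⁻¹ * g ((k : ℝ) * t₀) * t₀)) ≠ ⊤ :=
      (lt_of_le_of_lt (ENNReal.tsum_le_tsum hlow) hfin).ne
    have hs1 : Summable (fun k : ℕ => (K⁻¹ * g ((k : ℝ) * t₀) * t₀).toNNReal) :=
      ENNReal.tsum_coe_ne_top_iff_summable.mp hsum'
    have hs2 : Summable (fun k : ℕ => K⁻¹ * g ((k : ℝ) * t₀) * t₀) := by
      have := NNReal.summable_coe.mpr hs1
      refine this.congr fun k => ?_
      have hk0 : (0:ℝ) ≤ (k : ℝ) * t₀ := by positivity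
      have := hgpos ((k : ℝ) * t₀) hk0
      rw [Real.coe_toNNReal]
      positivity
    have hs3 : Summable (fun k : ℕ => (K⁻¹ * t₀) * g ((k : ℝ) * t₀)) :=
      hs2.congr fun k => by ring
    have hne : K⁻¹ * t₀ ≠ 0 := by positivity
    exact (summable_mul_left_iff hne).mp hs3
  · -- summable → integrable
    intro hsum
    refine ⟨hgae.aestronglyMeasurable, ?_⟩
    rw [hasFiniteIntegral_iff_ofReal hnn, hdecomp]
    have hup : ∀ k : ℕ, (∫⁻ t in S k, ENNReal.ofReal (g t))
        ≤ ENNReal.ofReal (K * g (((k : ℝ) + 1) * t₀) * t₀) := by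
      intro k
      have hk0 : (0:ℝ) ≤ (k : ℝ) * t₀ := by positivity
      have hstep : (∫⁻ t in S k, ENNReal.ofReal (g t))
          ≤ ∫⁻ _ in S k, ENNReal.ofReal (K * g (((k : ℝ) + 1) * t₀)) := by
        apply lintegral_mono_ae
        rw [ae_restrict_iff' (hSm k)]
        apply Filter.Eventually.of_forall
        intro t ht
        apply ENNReal.ofReal_le_ofReal
        have ht0 : (0:ℝ) ≤ t := le_trans hk0 ht.1
        exact key t (((k : ℝ) + 1) * t₀) ht0 ht.2.le (by nlinarith [ht.1])
      calc (∫⁻ t in S k, ENNReal.ofReal (g t))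
          ≤ ∫⁻ _ in S k, ENNReal.ofReal (K * g (((k : ℝ) + 1) * t₀)) := hstep
        _ = ENNReal.ofReal (K * g (((k : ℝ) + 1) * t₀)) * volume (S k) :=
            setLIntegral_const _ _
        _ = ENNReal.ofReal (K * g (((k : ℝ) + 1) * t₀)) * ENNReal.ofReal t₀ := by rw [hvol k]
        _ = ENNReal.ofReal (K * g (((k : ℝ) + 1) * t₀) * t₀) := by
            rw [← ENNReal.ofReal_mul]
            have hk1 : (0:ℝ) ≤ ((k : ℝ) + 1) * t₀ := by positivity
            have := hgpos (((k : ℝ) + 1) * t₀) hk1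
            positivity
    have hsumshift : Summable (fun k : ℕ => g (((k : ℝ) + 1) * t₀)) := by
      have h1 := (summable_nat_add_iff 1).mpr hsum
      refine h1.congr fun k => ?_
      push_cast
      ring_nf
    have hsum1 : Summable (fun k : ℕ => K * g (((k : ℝ) + 1) * t₀) * t₀) :=
      (hsumshift.mul_left K).mul_right t₀
    have hnn1 : ∀ k : ℕ, 0 ≤ K * g (((k : ℝ) + 1) * t₀) * t₀ := by
      intro k
      have hk1 : (0:ℝ) ≤ ((k : ℝ) + 1) * t₀ := by positivity
      have := hgpos (((k : ℝ) + 1) * t₀) hk1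
      positivity
    calc (∑' k : ℕ, ∫⁻ t in S k, ENNReal.ofReal (g t))
        ≤ ∑' k : ℕ, ENNReal.ofReal (K * g (((k : ℝ) + 1) * t₀) * t₀) :=
          ENNReal.tsum_le_tsum hup
      _ = ENNReal.ofReal (∑' k : ℕ, K * g (((k : ℝ) + 1) * t₀) * t₀) :=
          (ENNReal.ofReal_tsum_of_nonneg hnn1 hsum1).symm
      _ < ⊤ := ENNReal.ofReal_lt_top
end

section
/- Let Ω ⊆ ℝ be open and forward invariant under F ∈ C¹(Ω), h ∈ C(Ω), 1 ≤ p < ∞, ρ : Ω → (0,∞) measurable. For x ∈ Ω with F(x) ≠ 0 let C(x) denote the connected component of Ω \ {F = 0} containing x, and let ρ_{t,p} be defined as in the paper (via the semiflow φ). Then ∫_ℝ ρ_{t,p}(x) dt = (1/|F(x)|) ∫_{C(x)} exp(p ∫_w^x Re h(y)/F(y) dy) ρ(w) dw. -/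
/-!
Let `C` be the component of `{F ≠ 0}` containing `x` and `τ(w) = ∫_x^w dy / F(y)`. Along orbits
`τ(φ(t, y)) = τ(y) + t`, and `τ` is injective on `C` because `τ' = 1 / F` does not vanish there.
Hence `ρ_{t,p}(x) ≠ 0` only for `t = -τ(w)` with `w ∈ C`, and then an orbit segment of length
`|t|` joins `w` and `x`. Substituting `t = -τ(w)`, with `|dt/dw| = 1 / |F(w)|`, turns the time
integral into an integral over `C`, and Liouville's formula
`exp ∫₀ᵗ F'(φ(s, y)) ds = |F(φ(t, y))| / |F(y)|` together with
`∫₀ᵗ g(φ(s, y)) ds = ∫_y^{φ(t, y)} g / F` identifies the integrands.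
-/

open Set MeasureTheory Filter Topology

theorem injOn_of_hasDerivAt_ne_zero {f f' : ℝ → ℝ} {s : Set ℝ} (hs : s.OrdConnected)
    (hf : ∀ x ∈ s, HasDerivAt f (f' x) x) (hf' : ∀ x ∈ s, f' x ≠ 0) : InjOn f s := by
  have hlt : ∀ a ∈ s, ∀ b ∈ s, a < b → f a ≠ f b := by
    intro a ha b hb hab hfab
    have hI : Icc a b ⊆ s := hs.out ha hb
    obtain ⟨c, hc, hc0⟩ := exists_hasDerivAt_eq_zero hab
      (fun y hy => (hf y (hI hy)).continuousAt.continuousWithinAt) hfab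
      fun y hy => hf y (hI (Ioo_subset_Icc_self hy))
    exact hf' c (hI (Ioo_subset_Icc_self hc)) hc0
  intro a ha b hb hfab
  by_contra hne
  rcases lt_or_gt_of_ne hne with hab | hba
  exacts [hlt a ha b hb hab hfab, hlt b hb a ha hba hfab.symm]

theorem hasDerivAt_integral_of_continuousOn {f : ℝ → ℝ} {s : Set ℝ} (hs : IsOpen s)
    (hs' : s.OrdConnected) (hf : ContinuousOn f s) {a b : ℝ} (ha : a ∈ s) (hb : b ∈ s) :
    HasDerivAt (fun w => ∫ y in a..w, f y) (f b) b :=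
  intervalIntegral.integral_hasDerivAt_right
    (hf.mono (hs'.uIcc_subset ha hb)).intervalIntegrable
    (hf.stronglyMeasurableAtFilter hs b hb) (hf.continuousAt (hs.mem_nhds hb))

theorem hasDerivWithinAt_integral_Ici {g : ℝ → ℝ} (hg : ContinuousOn g (Ici 0)) {s : ℝ}
    (hs : 0 ≤ s) : HasDerivWithinAt (fun t => ∫ r in 0..t, g r) (g s) (Ici s) s := by
  have hIci : Ici 0 ∈ 𝓝[>] s :=
    mem_of_superset self_mem_nhdsWithin fun r hr => hs.trans (le_of_lt hr)
  exact intervalIntegral.integral_hasDerivWithinAt_right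
    ((hg.mono (by rw [uIcc_of_le hs]; exact Icc_subset_Ici_self)).intervalIntegrable)
    ⟨Ici 0, hIci, hg.aestronglyMeasurable measurableSet_Ici⟩
    ((hg s hs).mono fun r hr => hs.trans (le_of_lt hr))

theorem eq_mul_exp_integral_of_hasDerivAt {f g : ℝ → ℝ} (hg : ContinuousOn g (Ici 0))
    (hf : ∀ s, 0 ≤ s → HasDerivAt f (g s * f s) s) {t : ℝ} (ht : 0 ≤ t) :
    f t = f 0 * Real.exp (∫ s in 0..t, g s) := by
  set A : ℝ → ℝ := fun t => ∫ s in 0..t, g s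
  have hA : ContinuousOn A (Icc 0 t) := by
    have := intervalIntegral.continuousOn_primitive_interval (μ := volume) (a := 0) (b := t)
      (by rw [uIcc_of_le ht]; exact (hg.mono Icc_subset_Ici_self).integrableOn_Icc)
    rwa [uIcc_of_le ht] at this
  have hderiv : ∀ s ∈ Ico 0 t, HasDerivWithinAt (fun s => f s * Real.exp (-A s)) 0 (Ici s) s := by
    intro s hs
    have hexp : HasDerivWithinAt (fun r => Real.exp (-A r)) (Real.exp (-A s) * -g s) (Ici s) s :=
      (hasDerivWithinAt_integral_Ici hg hs.1).neg.exp
    exact ((hf s hs.1).hasDerivWithinAt.fun_mul hexp).congr_deriv (by ring)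
  have hcont : ContinuousOn (fun s => f s * Real.exp (-A s)) (Icc 0 t) :=
    (HasDerivAt.continuousOn fun s hs => hf s hs.1).mul hA.neg.rexp
  have hconst := constant_of_has_deriv_right_zero hcont hderiv t (right_mem_Icc.2 ht)
  simp only [A, intervalIntegral.integral_same, neg_zero, Real.exp_zero, mul_one] at hconst
  rw [← hconst, mul_assoc, ← Real.exp_add, neg_add_cancel, Real.exp_zero, mul_one]

theorem connectedComponentIn_eq_of_continuousOn_Icc {α : Type*} [TopologicalSpace α]
    {Z : Set α} {u : ℝ → α} {a b : ℝ} (hab : a ≤ b) (hu : ContinuousOn u (Icc a b))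
    (huZ : MapsTo u (Icc a b) Z) : connectedComponentIn Z (u b) = connectedComponentIn Z (u a) :=
  (connectedComponentIn_eq <| (isPreconnected_Icc.image u hu).subset_connectedComponentIn
    (mem_image_of_mem u (left_mem_Icc.2 hab)) huZ.image_subset
    (mem_image_of_mem u (right_mem_Icc.2 hab))).symm

theorem integral_comp_eq_integral_div_of_hasDerivAt {F g u : ℝ → ℝ} {C : Set ℝ} {a b : ℝ}
    (hu : ∀ s ∈ uIcc a b, HasDerivAt u (F (u s)) s) (huC : MapsTo u (uIcc a b) C)
    (hF : ContinuousOn F C) (hF0 : ∀ w ∈ C, F w ≠ 0) (hg : ContinuousOn g C) :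
    ∫ s in a..b, g (u s) = ∫ w in u a..u b, g w / F w := by
  have hucont : ContinuousOn u (uIcc a b) := HasDerivAt.continuousOn hu
  rw [← intervalIntegral.integral_comp_mul_deriv'' (g := fun w => g w / F w) hucont
    (fun s hs => (hu s (Ioo_subset_Icc_self hs)).hasDerivWithinAt)
    (hF.comp hucont huC) ((hg.div hF hF0).mono huC.image_subset)]
  exact intervalIntegral.integral_congr fun s hs => (div_mul_cancel₀ _ (hF0 _ (huC hs))).symm

structure IsForwardFlow (F : ℝ → ℝ) (Ω : Set ℝ) (φ : ℝ → ℝ → ℝ) : Prop where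
  apply_zero : ∀ y ∈ Ω, φ 0 y = y
  mapsTo : ∀ y ∈ Ω, ∀ t, 0 ≤ t → φ t y ∈ Ω
  hasDerivAt : ∀ y ∈ Ω, ∀ t, 0 ≤ t → HasDerivAt (fun s => φ s y) (F (φ t y)) t

namespace IsForwardFlow

variable {F : ℝ → ℝ} {Ω : Set ℝ} {φ : ℝ → ℝ → ℝ} {x y t : ℝ}

theorem continuousOn (hφ : IsForwardFlow F Ω φ) (hy : y ∈ Ω) :
    ContinuousOn (fun s => φ s y) (Ici 0) :=
  HasDerivAt.continuousOn fun s hs => hφ.hasDerivAt y hy s hs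

theorem apply_eq_mul_exp_integral_deriv (hφ : IsForwardFlow F Ω φ) (hΩ : IsOpen Ω)
    (hF : ContDiffOn ℝ 1 F Ω) (hy : y ∈ Ω) (ht : 0 ≤ t) :
    F (φ t y) = F y * Real.exp (∫ s in 0..t, deriv F (φ s y)) := by
  have hsol := eq_mul_exp_integral_of_hasDerivAt (f := fun s => F (φ s y))
    ((hF.continuousOn_deriv_of_isOpen hΩ le_rfl).comp (hφ.continuousOn hy)
      fun s hs => hφ.mapsTo y hy s hs)
    (fun s hs => ((hF.differentiableOn one_ne_zero).differentiableAt
      (hΩ.mem_nhds (hφ.mapsTo y hy s hs))).hasDerivAt.comp s (hφ.hasDerivAt y hy s hs)) ht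
  rwa [hφ.apply_zero y hy] at hsol

theorem apply_eq_zero_iff (hφ : IsForwardFlow F Ω φ) (hΩ : IsOpen Ω) (hF : ContDiffOn ℝ 1 F Ω)
    (hy : y ∈ Ω) (ht : 0 ≤ t) : F (φ t y) = 0 ↔ F y = 0 := by
  rw [hφ.apply_eq_mul_exp_integral_deriv hΩ hF hy ht, mul_eq_zero,
    or_iff_left (Real.exp_ne_zero _)]

theorem exp_integral_deriv_eq_abs_div (hφ : IsForwardFlow F Ω φ) (hΩ : IsOpen Ω)
    (hF : ContDiffOn ℝ 1 F Ω) (hy : y ∈ Ω) (hFy : F y ≠ 0) (ht : 0 ≤ t) :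
    Real.exp (∫ s in 0..t, deriv F (φ s y)) = |F (φ t y)| / |F y| := by
  rw [hφ.apply_eq_mul_exp_integral_deriv hΩ hF hy ht, abs_mul, abs_of_pos (Real.exp_pos _),
    mul_div_cancel_left₀ _ (abs_ne_zero.2 hFy)]

end IsForwardFlow

/-- The time the solution of `ẋ = F x` needs to travel from `x` to `w`, inside a component of
`{F ≠ 0}`. -/
noncomputable def flowTime (F : ℝ → ℝ) (x w : ℝ) : ℝ := ∫ y in x..w, (F y)⁻¹

section Component

variable {F : ℝ → ℝ} {Ω : Set ℝ} {φ : ℝ → ℝ → ℝ} {x y z t : ℝ}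

local notation "𝒞" => connectedComponentIn (Ω \ Set.ofPred fun w => F w = 0) x

theorem isOpen_connectedComponentIn_diff_zeros (hΩ : IsOpen Ω) (hF : ContinuousOn F Ω) :
    IsOpen 𝒞 :=
  (hF.isOpen_inter_preimage hΩ isOpen_compl_singleton).connectedComponentIn

theorem continuousOn_inv_connectedComponentIn_diff_zeros (hF : ContinuousOn F Ω) :
    ContinuousOn (fun w => (F w)⁻¹) 𝒞 :=
  have hsub := connectedComponentIn_subset (Ω \ {w | F w = 0}) x
  (hF.mono fun _ hw => (hsub hw).1).inv₀ fun _ hw => (hsub hw).2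

theorem hasDerivAt_flowTime (hΩ : IsOpen Ω) (hF : ContinuousOn F Ω) (hy : y ∈ 𝒞) :
    HasDerivAt (flowTime F x) (F y)⁻¹ y :=
  hasDerivAt_integral_of_continuousOn (isOpen_connectedComponentIn_diff_zeros hΩ hF)
    isPreconnected_connectedComponentIn.ordConnected
    (continuousOn_inv_connectedComponentIn_diff_zeros hF)
    (mem_connectedComponentIn (connectedComponentIn_nonempty_iff.1 ⟨y, hy⟩)) hy

theorem injOn_flowTime (hΩ : IsOpen Ω) (hF : ContinuousOn F Ω) : InjOn (flowTime F x) 𝒞 :=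
  injOn_of_hasDerivAt_ne_zero isPreconnected_connectedComponentIn.ordConnected
    (fun _ hw => hasDerivAt_flowTime hΩ hF hw)
    fun _ hw => inv_ne_zero (connectedComponentIn_subset _ _ hw).2

namespace IsForwardFlow

theorem apply_mem_connectedComponentIn_iff (hφ : IsForwardFlow F Ω φ) (hΩ : IsOpen Ω)
    (hF : ContDiffOn ℝ 1 F Ω) (hy : y ∈ Ω) (ht : 0 ≤ t) :
    φ t y ∈ 𝒞 ↔ y ∈ 𝒞 := by
  set Z := Ω \ {w | F w = 0}
  have hZ : ∀ s, 0 ≤ s → y ∈ Z → φ s y ∈ Z := fun s hs hyZ =>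
    ⟨hφ.mapsTo y hy s hs, (hφ.apply_eq_zero_iff hΩ hF hy hs).not.2 hyZ.2⟩
  have hcc : y ∈ Z → connectedComponentIn Z (φ t y) = connectedComponentIn Z y := by
    intro hyZ
    have heq := connectedComponentIn_eq_of_continuousOn_Icc (u := fun s => φ s y) ht
      ((hφ.continuousOn hy).mono Icc_subset_Ici_self) fun s hs => hZ s hs.1 hyZ
    rwa [hφ.apply_zero y hy] at heq
  constructor
  · intro h
    have hyZ : y ∈ Z :=
      ⟨hy, (hφ.apply_eq_zero_iff hΩ hF hy ht).not.1 (connectedComponentIn_subset Z x h).2⟩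
    rw [connectedComponentIn_eq h, hcc hyZ]
    exact mem_connectedComponentIn hyZ
  · intro h
    have hyZ : y ∈ Z := connectedComponentIn_subset Z x h
    rw [connectedComponentIn_eq h, ← hcc hyZ]
    exact mem_connectedComponentIn (hZ t ht hyZ)

theorem mapsTo_connectedComponentIn (hφ : IsForwardFlow F Ω φ) (hΩ : IsOpen Ω)
    (hF : ContDiffOn ℝ 1 F Ω) (hy : y ∈ 𝒞) (ht : 0 ≤ t) : φ t y ∈ 𝒞 :=
  (hφ.apply_mem_connectedComponentIn_iff hΩ hF (connectedComponentIn_subset _ _ hy).1 ht).2 hy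

theorem integral_comp_eq_integral_div {g : ℝ → ℝ} (hφ : IsForwardFlow F Ω φ) (hΩ : IsOpen Ω)
    (hF : ContDiffOn ℝ 1 F Ω) (hg : ContinuousOn g Ω) (hy : y ∈ 𝒞) (ht : 0 ≤ t) :
    ∫ s in 0..t, g (φ s y) = ∫ w in y..φ t y, g w / F w := by
  have hsub := connectedComponentIn_subset (Ω \ {w | F w = 0}) x
  have hsubst := integral_comp_eq_integral_div_of_hasDerivAt (u := fun s => φ s y) (C := 𝒞)
    (fun s hs => hφ.hasDerivAt _ (hsub hy).1 s (by rw [uIcc_of_le ht] at hs; exact hs.1))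
    (fun s hs => hφ.mapsTo_connectedComponentIn hΩ hF hy
      (by rw [uIcc_of_le ht] at hs; exact hs.1))
    (hF.continuousOn.mono fun w hw => (hsub hw).1) (fun w hw => (hsub hw).2)
    (hg.mono fun w hw => (hsub hw).1)
  rwa [hφ.apply_zero _ (hsub hy).1] at hsubst

theorem flowTime_apply (hφ : IsForwardFlow F Ω φ) (hΩ : IsOpen Ω) (hF : ContDiffOn ℝ 1 F Ω)
    (hy : y ∈ 𝒞) (ht : 0 ≤ t) : flowTime F x (φ t y) = flowTime F x y + t := by
  have hxC : x ∈ 𝒞 := mem_connectedComponentIn (connectedComponentIn_nonempty_iff.1 ⟨y, hy⟩)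
  have hint : ∀ w ∈ 𝒞, IntervalIntegrable (fun w => (F w)⁻¹) volume x w := fun w hw =>
    ((continuousOn_inv_connectedComponentIn_diff_zeros hF.continuousOn).mono
      (isPreconnected_connectedComponentIn.ordConnected.uIcc_subset hxC hw)).intervalIntegrable
  have hsubst := hφ.integral_comp_eq_integral_div (g := fun _ => 1) hΩ hF continuousOn_const hy ht
  have hdiff := intervalIntegral.integral_interval_sub_left
    (hint _ (hφ.mapsTo_connectedComponentIn hΩ hF hy ht)) (hint _ hy)
  simp only [intervalIntegral.integral_const, sub_zero, smul_eq_mul, mul_one, one_div] at hsubst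
  rw [flowTime, flowTime]
  linarith

theorem apply_flowTime_sub (hφ : IsForwardFlow F Ω φ) (hΩ : IsOpen Ω) (hF : ContDiffOn ℝ 1 F Ω)
    (hy : y ∈ 𝒞) (hz : z ∈ 𝒞) (hyz : flowTime F x y ≤ flowTime F x z) :
    φ (flowTime F x z - flowTime F x y) y = z :=
  injOn_flowTime hΩ hF.continuousOn (hφ.mapsTo_connectedComponentIn hΩ hF hy (sub_nonneg.2 hyz))
    hz (by rw [hφ.flowTime_apply hΩ hF hy (sub_nonneg.2 hyz), add_sub_cancel])

theorem exp_integral_sub_deriv_eq {h : ℝ → ℂ} {p : ℝ} (hφ : IsForwardFlow F Ω φ)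
    (hΩ : IsOpen Ω) (hF : ContDiffOn ℝ 1 F Ω) (hh : ContinuousOn h Ω) (hy : y ∈ 𝒞) (ht : 0 ≤ t) :
    Real.exp (∫ s in 0..t, p * (h (φ s y)).re - deriv F (φ s y)) =
      Real.exp (p * ∫ w in y..φ t y, (h w).re / F w) * (|F y| / |F (φ t y)|) := by
  have hyZ := connectedComponentIn_subset (Ω \ {w | F w = 0}) x hy
  have horbit : ContinuousOn (fun s => φ s y) (uIcc 0 t) :=
    (hφ.continuousOn hyZ.1).mono (by rw [uIcc_of_le ht]; exact Icc_subset_Ici_self)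
  have hmaps : MapsTo (fun s => φ s y) (uIcc 0 t) Ω := fun s hs =>
    hφ.mapsTo _ hyZ.1 s (by rw [uIcc_of_le ht] at hs; exact hs.1)
  have hre : IntervalIntegrable (fun s => (h (φ s y)).re) volume 0 t :=
    ((Complex.continuous_re.comp_continuousOn hh).comp horbit hmaps).intervalIntegrable
  have hderiv : IntervalIntegrable (fun s => deriv F (φ s y)) volume 0 t :=
    ((hF.continuousOn_deriv_of_isOpen hΩ le_rfl).comp horbit hmaps).intervalIntegrable
  rw [intervalIntegral.integral_sub (hre.const_mul p) hderiv, intervalIntegral.integral_const_mul,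
    Real.exp_sub, hφ.integral_comp_eq_integral_div (g := fun w => (h w).re) hΩ hF
      (Complex.continuous_re.comp_continuousOn hh) hy ht,
    hφ.exp_integral_deriv_eq_abs_div hΩ hF hyZ.1 hyZ.2 ht, div_div_eq_mul_div, mul_div_assoc]

theorem exp_neg_integral_mul_exp_integral_deriv_eq {h : ℝ → ℂ} {p : ℝ}
    (hφ : IsForwardFlow F Ω φ) (hΩ : IsOpen Ω) (hF : ContDiffOn ℝ 1 F Ω) (hh : ContinuousOn h Ω)
    (hy : y ∈ 𝒞) (ht : 0 ≤ t) :
    Real.exp (-(p * ∫ s in 0..t, (h (φ s y)).re)) * Real.exp (∫ s in 0..t, deriv F (φ s y)) =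
      Real.exp (p * ∫ w in φ t y..y, (h w).re / F w) * (|F (φ t y)| / |F y|) := by
  have hyZ := connectedComponentIn_subset (Ω \ {w | F w = 0}) x hy
  rw [hφ.integral_comp_eq_integral_div (g := fun w => (h w).re) hΩ hF
      (Complex.continuous_re.comp_continuousOn hh) hy ht,
    hφ.exp_integral_deriv_eq_abs_div hΩ hF hyZ.1 hyZ.2 ht, intervalIntegral.integral_symm y,
    mul_neg]

end IsForwardFlow

section Density

variable {h : ℝ → ℂ} {ρ : ℝ → ℝ} {p : ℝ} {ρt : ℝ → ℝ → ℝ}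

theorem density_neg_flowTime_eq (hφ : IsForwardFlow F Ω φ) (hΩ : IsOpen Ω)
    (hF : ContDiffOn ℝ 1 F Ω) (hh : ContinuousOn h Ω)
    (hρt_pos : ∀ t : ℝ, 0 ≤ t → ∀ y ∈ Ω,
      ρt t (φ t y) =
        Real.exp (∫ s in (0:ℝ)..t, p * (h (φ s y)).re - deriv F (φ s y)) * ρ y)
    (hρt_neg : ∀ t : ℝ, 0 ≤ t → ∀ y ∈ Ω,
      ρt (-t) y =
        Real.exp (-(p * ∫ s in (0:ℝ)..t, (h (φ s y)).re)) *
          Real.exp (∫ s in (0:ℝ)..t, deriv F (φ s y)) * ρ (φ t y))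
    (hy : y ∈ 𝒞) :
    ρt (-flowTime F x y) x =
      |F y| / |F x| * (Real.exp (p * ∫ w in y..x, (h w).re / F w) * ρ y) := by
  have hxZ := connectedComponentIn_nonempty_iff.1 ⟨y, hy⟩
  have hxC : x ∈ 𝒞 := mem_connectedComponentIn hxZ
  have hτx : flowTime F x x = 0 := intervalIntegral.integral_same
  -- Either the orbit of `y` reaches `x` at time `-flowTime F x y`,
  -- or the orbit of `x` reaches `y` at time `flowTime F x y`.
  rcases le_or_gt (flowTime F x y) 0 with hτy | hτy
  · have hhit := hφ.apply_flowTime_sub hΩ hF hy hxC (by rwa [hτx])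
    rw [hτx, zero_sub] at hhit
    have hρ := hρt_pos _ (neg_nonneg.2 hτy) y (connectedComponentIn_subset _ _ hy).1
    rw [hφ.exp_integral_sub_deriv_eq hΩ hF hh hy (neg_nonneg.2 hτy), hhit] at hρ
    rw [hρ]
    ring
  · have hhit := hφ.apply_flowTime_sub hΩ hF hxC hy (by rw [hτx]; exact hτy.le)
    rw [hτx, sub_zero] at hhit
    rw [hρt_neg _ hτy.le x hxZ.1,
      hφ.exp_neg_integral_mul_exp_integral_deriv_eq hΩ hF hh hxC hτy.le, hhit]
    ring

theorem support_density_subset_image_neg_flowTime (hφ : IsForwardFlow F Ω φ) (hΩ : IsOpen Ω)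
    (hF : ContDiffOn ℝ 1 F Ω)
    (hρt_out : ∀ t : ℝ, 0 ≤ t → ∀ y : ℝ, y ∉ φ t '' Ω → ρt t y = 0) (hx : x ∈ Ω)
    (hFx : F x ≠ 0) :
    (Function.support fun t => ρt t x) ⊆ (fun w => -flowTime F x w) '' 𝒞 := by
  have hxC : x ∈ 𝒞 := mem_connectedComponentIn ⟨hx, hFx⟩
  have hτx : flowTime F x x = 0 := intervalIntegral.integral_same
  intro t ht
  rcases lt_or_ge t 0 with ht0 | ht0
  · refine ⟨φ (-t) x, hφ.mapsTo_connectedComponentIn hΩ hF hxC (neg_nonneg.2 ht0.le), ?_⟩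
    show -flowTime F x (φ (-t) x) = t
    rw [hφ.flowTime_apply hΩ hF hxC (neg_nonneg.2 ht0.le), hτx, zero_add, neg_neg]
  · obtain ⟨y, hyΩ, hyx⟩ := not_not.1 (mt (hρt_out t ht0 x) ht)
    have hy : y ∈ 𝒞 := (hφ.apply_mem_connectedComponentIn_iff hΩ hF hyΩ ht0).1 (hyx ▸ hxC)
    refine ⟨y, hy, ?_⟩
    have htime := hφ.flowTime_apply hΩ hF hy ht0
    rw [hyx, hτx] at htime
    linarith

end Density

end Component

theorem integral_over_time_eq_component_integral_general (Ω : Set ℝ) (hΩ : IsOpen Ω)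
    (F : ℝ → ℝ) (hF : ContDiffOn ℝ 1 F Ω)
    (h : ℝ → ℂ) (hh : ContinuousOn h Ω)
    (ρ : ℝ → ℝ)
    (p : ℝ)
    (φ : ℝ → ℝ → ℝ)
    (hφ0 : ∀ y ∈ Ω, φ 0 y = y)
    (hφΩ : ∀ y ∈ Ω, ∀ t : ℝ, 0 ≤ t → φ t y ∈ Ω)
    (hφ' : ∀ y ∈ Ω, ∀ t : ℝ, 0 ≤ t → HasDerivAt (fun s => φ s y) (F (φ t y)) t)
    (ρt : ℝ → ℝ → ℝ)
    (hρt_pos : ∀ t : ℝ, 0 ≤ t → ∀ y ∈ Ω,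
      ρt t (φ t y) =
        Real.exp (∫ s in (0:ℝ)..t, p * (h (φ s y)).re - deriv F (φ s y)) * ρ y)
    (hρt_out : ∀ t : ℝ, 0 ≤ t → ∀ y : ℝ, y ∉ φ t '' Ω → ρt t y = 0)
    (hρt_neg : ∀ t : ℝ, 0 ≤ t → ∀ y ∈ Ω,
      ρt (-t) y =
        Real.exp (-(p * ∫ s in (0:ℝ)..t, (h (φ s y)).re)) *
          Real.exp (∫ s in (0:ℝ)..t, deriv F (φ s y)) * ρ (φ t y))
    (x : ℝ) (hx : x ∈ Ω) (hFx : F x ≠ 0) :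
    ∫⁻ t : ℝ, ENNReal.ofReal (ρt t x)
      = ENNReal.ofReal (1 / |F x|) *
        ∫⁻ w in connectedComponentIn (Ω \ {y | F y = 0}) x,
          ENNReal.ofReal (Real.exp (p * ∫ y in w..x, (h y).re / F y) * ρ w) := by
  have hφ : IsForwardFlow F Ω φ := ⟨hφ0, hφΩ, hφ'⟩
  set C := connectedComponentIn (Ω \ {y | F y = 0}) x
  have hC : MeasurableSet C :=
    (isOpen_connectedComponentIn_diff_zeros hΩ hF.continuousOn).measurableSet
  have hτ' : ∀ w ∈ C, HasDerivWithinAt (fun w => -flowTime F x w) (-(F w)⁻¹) C w :=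
    fun w hw => (hasDerivAt_flowTime hΩ hF.continuousOn hw).neg.hasDerivWithinAt
  have hτinj : InjOn (fun w => -flowTime F x w) C := fun a ha b hb hab =>
    injOn_flowTime hΩ hF.continuousOn ha hb (neg_injective hab)
  rw [← setLIntegral_eq_of_support_subset (f := fun t => ENNReal.ofReal (ρt t x))
      ((Function.support_comp_subset ENNReal.ofReal_zero _).trans
        (support_density_subset_image_neg_flowTime hφ hΩ hF hρt_out hx hFx)),
    lintegral_image_eq_lintegral_abs_deriv_mul hC hτ' hτinj,
    ← lintegral_const_mul' _ _ ENNReal.ofReal_ne_top]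
  refine setLIntegral_congr_fun hC fun w hw => ?_
  have hFw : F w ≠ 0 := (connectedComponentIn_subset _ _ hw).2
  rw [density_neg_flowTime_eq hφ hΩ hF hh hρt_pos hρt_neg hw, abs_neg, abs_inv,
    ← ENNReal.ofReal_mul (by positivity), ← ENNReal.ofReal_mul (by positivity)]
  congr 1
  field_simp

/-- For `x ∈ Ω` with `F(x) ≠ 0`,
`∫_ℝ ρ_{t,p}(x) dt = |F(x)|⁻¹ ∫_{C(x)} exp(p ∫_w^x Re h(y)/F(y) dy) ρ(w) dw`,
where `C(x)` is the connected component of `Ω \ {F = 0}` containing `x` and the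
family `ρt` is determined by:
`ρ_{t,p}(φ(t,y)) = exp(∫₀ᵗ [p Re h(φ(s,y)) − F'(φ(s,y))] ds) ρ(y)` and
`ρ_{t,p} = 0` off `φ(t,Ω)` for `t ≥ 0`, and
`ρ_{−t,p}(y) = exp(−p ∫₀ᵗ Re h(φ(s,y)) ds) exp(∫₀ᵗ F'(φ(s,y)) ds) ρ(φ(t,y))`. -/
theorem integral_over_time_eq_component_integral (Ω : Set ℝ) (hΩ : IsOpen Ω)
    (F : ℝ → ℝ) (hF : ContDiffOn ℝ 1 F Ω) (hF'c : ContinuousOn (deriv F) Ω)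
    (h : ℝ → ℂ) (hh : ContinuousOn h Ω)
    (ρ : ℝ → ℝ) (hρm : Measurable ρ) (hρpos : ∀ y ∈ Ω, 0 < ρ y)
    (p : ℝ) (hp : 1 ≤ p)
    (φ : ℝ → ℝ → ℝ)
    (hφ0 : ∀ y ∈ Ω, φ 0 y = y)
    (hφΩ : ∀ y ∈ Ω, ∀ t : ℝ, 0 ≤ t → φ t y ∈ Ω)
    (hφ' : ∀ y ∈ Ω, ∀ t : ℝ, 0 ≤ t → HasDerivAt (fun s => φ s y) (F (φ t y)) t)
    (hsemi : ∀ y ∈ Ω, ∀ s t : ℝ, 0 ≤ s → 0 ≤ t → φ (t + s) y = φ t (φ s y))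
    (ρt : ℝ → ℝ → ℝ)
    (hρt_pos : ∀ t : ℝ, 0 ≤ t → ∀ y ∈ Ω,
      ρt t (φ t y) =
        Real.exp (∫ s in (0:ℝ)..t, p * (h (φ s y)).re - deriv F (φ s y)) * ρ y)
    (hρt_out : ∀ t : ℝ, 0 ≤ t → ∀ y : ℝ, y ∉ φ t '' Ω → ρt t y = 0)
    (hρt_neg : ∀ t : ℝ, 0 ≤ t → ∀ y ∈ Ω,
      ρt (-t) y =
        Real.exp (-(p * ∫ s in (0:ℝ)..t, (h (φ s y)).re)) *
          Real.exp (∫ s in (0:ℝ)..t, deriv F (φ s y)) * ρ (φ t y))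
    (x : ℝ) (hx : x ∈ Ω) (hFx : F x ≠ 0) :
    ∫⁻ t : ℝ, ENNReal.ofReal (ρt t x)
      = ENNReal.ofReal (1 / |F x|) *
        ∫⁻ w in connectedComponentIn (Ω \ {y | F y = 0}) x,
          ENNReal.ofReal (Real.exp (p * ∫ y in w..x, (h y).re / F y) * ρ w) :=
  integral_over_time_eq_component_integral_general Ω hΩ F hF h hh ρ p φ hφ0 hφΩ hφ' ρt hρt_pos
    hρt_out hρt_neg x hx hFx
end

section
/- Let h ∈ C[0,1] be real valued with x ↦ (h(x) − h(0))/x ∈ L¹(0,1), and 1 ≤ p < ∞. Then for some (equivalently every) x ∈ (0,1), the integral ∫₀¹ exp(p ∫_x^w h(y)/y dy) dw is finite if and only if h(0) > −1/p. -/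
open Set MeasureTheory

/-!
Split `h y / y = h 0 / y + (h y - h 0) / y`. The first part integrates to `h 0 * log (w / x)`,
so `exp (p * ∫ y in x..w, h y / y) = w ^ (p * h 0) * exp (u w)` with `u` bounded, because
`(h y - h 0) / y` is integrable on `(0, 1)`. Hence integrability on `(0, 1)` is that of
`w ^ (p * h 0)`, which holds iff `p * h 0 > -1`.
-/

lemma integrable_mul_exp_iff_of_abs_le {α : Type*} [MeasurableSpace α] {μ : Measure α}
    {f u : α → ℝ} {K : ℝ} (hu : AEStronglyMeasurable u μ) (hK : ∀ᵐ a ∂μ, |u a| ≤ K) :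
    Integrable (fun a => f a * Real.exp (u a)) μ ↔ Integrable f μ := by
  have hexp_le : ∀ᵐ a ∂μ, ‖Real.exp (u a)‖ ≤ Real.exp K := hK.mono fun a ha => by
    rw [Real.norm_of_nonneg (Real.exp_pos _).le]
    exact Real.exp_le_exp.2 ((le_abs_self _).trans ha)
  have hexp_neg_le : ∀ᵐ a ∂μ, ‖Real.exp (-u a)‖ ≤ Real.exp K := hK.mono fun a ha => by
    rw [Real.norm_of_nonneg (Real.exp_pos _).le]
    exact Real.exp_le_exp.2 ((neg_le_abs _).trans ha)
  refine ⟨fun hf => ?_, fun hf => hf.mul_bdd (Real.continuous_exp.comp_aestronglyMeasurable hu)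
    hexp_le⟩
  have hmul := hf.mul_bdd (Real.continuous_exp.comp_aestronglyMeasurable hu.neg) hexp_neg_le
  refine hmul.congr (ae_of_all _ fun a => ?_)
  simp only [Pi.neg_apply, mul_assoc, ← Real.exp_add, add_neg_cancel, Real.exp_zero, mul_one]

lemma norm_intervalIntegral_le_integral_norm {E : Type*} [NormedAddCommGroup E]
    [NormedSpace ℝ E] {g : ℝ → E} (hg : Integrable g) (x w : ℝ) :
    ‖∫ y in x..w, g y‖ ≤ ∫ y, ‖g y‖ :=
  calc ‖∫ y in x..w, g y‖ ≤ ∫ y in uIoc x w, ‖g y‖ :=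
        intervalIntegral.norm_integral_le_integral_norm_uIoc
    _ ≤ ∫ y, ‖g y‖ := setIntegral_le_integral hg.norm (ae_of_all _ fun _ => norm_nonneg _)

lemma integral_div_id_eq_mul_log_add {h : ℝ → ℝ} {x w : ℝ} (c : ℝ)
    (hh : ContinuousOn h (uIcc x w)) (hx : 0 < x) (hw : 0 < w) :
    ∫ y in x..w, h y / y = c * (Real.log w - Real.log x) + ∫ y in x..w, (h y - c) / y := by
  have hne : ∀ y ∈ uIcc x w, y ≠ 0 := fun y hy => ((lt_min hx hw).trans_le hy.1).ne'
  have hzero : (0 : ℝ) ∉ uIcc x w := fun h0 => hne 0 h0 rfl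
  have hconst : IntervalIntegrable (fun y : ℝ => c / y) volume x w :=
    (continuousOn_const.div continuousOn_id hne).intervalIntegrable
  have hrest : IntervalIntegrable (fun y : ℝ => (h y - c) / y) volume x w :=
    ((hh.sub continuousOn_const).div continuousOn_id hne).intervalIntegrable
  have hlog : ∫ y in x..w, c / y = c * (Real.log w - Real.log x) := by
    simp_rw [div_eq_mul_one_div c]
    rw [intervalIntegral.integral_const_mul, integral_one_div hzero,
      Real.log_div hw.ne' hx.ne']
  rw [← hlog, ← intervalIntegral.integral_add hconst hrest]
  refine intervalIntegral.integral_congr fun y _ => ?_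
  ring

/-- For real-valued `h ∈ C[0,1]` with `(h(x) − h(0))/x ∈ L¹(0,1)` and
`1 ≤ p < ∞`, for some (equivalently every) `x ∈ (0,1)` one has
`∫₀¹ exp(p ∫_x^w h(y)/y dy) dw < ∞` iff `h(0) > −1/p`. -/
theorem dawidowicz_poskrobko_criterion
    (h : ℝ → ℝ) (hh : ContinuousOn h (Icc (0:ℝ) 1))
    (hL1 : IntegrableOn (fun x => (h x - h 0) / x) (Ioo (0:ℝ) 1) volume)
    (p : ℝ) (hp : 1 ≤ p) :
    ∀ x ∈ Ioo (0:ℝ) 1,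
      (IntegrableOn (fun w => Real.exp (p * ∫ y in x..w, h y / y)) (Ioo (0:ℝ) 1) volume ↔
        h 0 > -1 / p) := by
  intro x hx
  have hp0 : 0 < p := by linarith
  -- extended by zero, so that its primitive is continuous and bounded on all of `ℝ`
  set g := (Ioo (0:ℝ) 1).indicator fun y => (h y - h 0) / y
  have hg : Integrable g := (integrable_indicator_iff measurableSet_Ioo).2 hL1
  set u : ℝ → ℝ := fun w => p * ((∫ y in x..w, g y) - h 0 * Real.log x)
  have hu_cont : Continuous u := continuous_const.mul
    ((intervalIntegral.continuous_primitive (fun _ _ => hg.intervalIntegrable) x).sub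
      continuous_const)
  have hu_bdd : ∀ w, |u w| ≤ p * ((∫ y, ‖g y‖) + |h 0 * Real.log x|) := fun w => by
    rw [abs_mul, abs_of_pos hp0]
    gcongr
    refine (abs_sub _ _).trans (add_le_add_left ?_ _)
    simpa only [Real.norm_eq_abs] using norm_intervalIntegral_le_integral_norm hg x w
  have hfactor : EqOn (fun w => Real.exp (p * ∫ y in x..w, h y / y))
      (fun w => w ^ (p * h 0) * Real.exp (u w)) (Ioo 0 1) := fun w hw => by
    have hxw : uIcc x w ⊆ Ioo 0 1 := ordConnected_Ioo.uIcc_subset hx hw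
    have hg_eq : ∫ y in x..w, (h y - h 0) / y = ∫ y in x..w, g y :=
      intervalIntegral.integral_congr fun y hy => (indicator_of_mem (hxw hy) _).symm
    simp only [u]
    rw [integral_div_id_eq_mul_log_add (h 0) (hh.mono (hxw.trans Ioo_subset_Icc_self)) hx.1 hw.1,
      hg_eq, Real.rpow_def_of_pos hw.1, ← Real.exp_add]
    ring_nf
  rw [integrableOn_congr_fun hfactor measurableSet_Ioo, IntegrableOn,
    integrable_mul_exp_iff_of_abs_le hu_cont.aestronglyMeasurable (ae_of_all _ hu_bdd),
    ← IntegrableOn, intervalIntegral.integrableOn_Ioo_rpow_iff zero_lt_one, gt_iff_lt,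
    div_lt_iff₀ hp0, mul_comm]
end

section
/- Let 1 ≤ p < ∞ and c ∈ ℝ. Then for every x ∈ (0,1), the function w ↦ w^{−p(1+c)} (1−w)^{−p(1−c)} x^{p(1+c)} (1−x)^{p(1−c)} does not belong to L¹(0,1). -/
open Set MeasureTheory

/-! Up to a positive constant the weight is `w ^ a * (1 - w) ^ b` with `a + b = -2p ≤ -2`.
On `[0, 1/2]` the factor `(1 - w) ^ b` is continuous and positive, so integrability near `0`
forces `-1 < a`; the reflection `w ↦ 1 - w` swaps `a` and `b` and forces `-1 < b` as well. -/

theorem MeasureTheory.IntegrableOn.comp_one_sub {E : Type*} [NormedAddCommGroup E] {f : ℝ → E}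
    (hf : IntegrableOn f (Ioo 0 1)) : IntegrableOn (fun w => f (1 - w)) (Ioo 0 1) := by
  rw [← intervalIntegrable_iff_integrableOn_Ioo_of_le zero_le_one] at hf ⊢
  simpa using (hf.comp_sub_left 1).symm

theorem neg_one_lt_of_integrableOn_rpow_mul_one_sub_rpow {a b : ℝ}
    (h : IntegrableOn (fun w : ℝ => w ^ a * (1 - w) ^ b) (Ioo 0 1)) : -1 < a := by
  have h_half : IntegrableOn (fun w : ℝ => w ^ a * (1 - w) ^ b) (Icc 0 (1 / 2)) := by
    rw [integrableOn_Icc_iff_integrableOn_Ioo]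
    exact h.mono_set (Ioo_subset_Ioo_right (by norm_num))
  have h_cont : ContinuousOn (fun w : ℝ => (1 - w) ^ (-b)) (Icc 0 (1 / 2)) :=
    ContinuousOn.rpow_const (f := fun w => 1 - w) (by fun_prop) fun w hw =>
      Or.inl (by linarith [hw.2])
  have h_rpow : IntegrableOn (fun w : ℝ => w ^ a) (Icc 0 (1 / 2)) := by
    refine (h_half.mul_continuousOn h_cont isCompact_Icc).congr_fun (fun w hw => ?_)
      measurableSet_Icc
    have : (0:ℝ) < 1 - w := by linarith [hw.2]
    simp only [mul_assoc, ← Real.rpow_add this, add_neg_cancel, Real.rpow_zero, mul_one]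
  exact (intervalIntegral.integrableOn_Ioo_rpow_iff (by norm_num : (0:ℝ) < 1 / 2)).1
    (h_rpow.mono_set Ioo_subset_Icc_self)

theorem not_integrableOn_rpow_mul_one_sub_rpow {a b : ℝ} (hab : a + b ≤ -2) :
    ¬ IntegrableOn (fun w : ℝ => w ^ a * (1 - w) ^ b) (Ioo 0 1) := by
  intro h
  have ha := neg_one_lt_of_integrableOn_rpow_mul_one_sub_rpow h
  have hb : -1 < b := neg_one_lt_of_integrableOn_rpow_mul_one_sub_rpow (a := b) (b := a) <| by
    simpa [mul_comm] using h.comp_one_sub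
  linarith

/-- For `1 ≤ p < ∞`, `c ∈ ℝ`, and any `x ∈ (0,1)`, the function
`w ↦ w^{−p(1+c)} (1−w)^{−p(1−c)} x^{p(1+c)} (1−x)^{p(1−c)}` is not in `L¹(0,1)`. -/
theorem logistic_weight_not_integrable (p : ℝ) (hp : 1 ≤ p) (c : ℝ)
    (x : ℝ) (hx : x ∈ Ioo (0:ℝ) 1) :
    ¬ IntegrableOn
        (fun w => w ^ (-(p * (1 + c))) * (1 - w) ^ (-(p * (1 - c))) *
          x ^ (p * (1 + c)) * (1 - x) ^ (p * (1 - c)))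
        (Ioo (0:ℝ) 1) volume := by
  have hX : IsUnit (x ^ (p * (1 + c))) := (Real.rpow_pos_of_pos hx.1 _).ne'.isUnit
  have hY : IsUnit ((1 - x) ^ (p * (1 - c))) :=
    (Real.rpow_pos_of_pos (sub_pos.2 hx.2) _).ne'.isUnit
  rw [IntegrableOn, integrable_mul_const_iff hY, integrable_mul_const_iff hX, ← IntegrableOn]
  exact not_integrableOn_rpow_mul_one_sub_rpow (by linarith)
end

section
/- Let Ω ⊆ ℝ be open, F ∈ C¹(Ω) with Ω forward invariant under F, and [a,b] ⊂ Ω \ {F = 0} a compact interval. Let ρ : Ω → (0,∞) be p-admissible for F and a real-valued h ∈ C(Ω), 1 ≤ p < ∞. Then there is a constant C > 0 such that C⁻¹ ≤ ρ(x) ≤ C for all x ∈ [a,b]. -/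
/-!
Since `F` has no zero on `[a, b]`, it has a constant sign there and `|F| > m > 0`; say `F > m`.
A fencing argument shows that the trajectory from any `x ∈ [a, b]` moves right at speed at least
`m`, so it reaches every `y ∈ [x, b]` within time `(b - a) / m` without leaving `[a, b]`.
Along such a piece of trajectory `h` and `F'` are bounded, so admissibility gives
`ρ x ≤ D ρ y` with `D` independent of `x, y`. Comparing with `ρ a` and `ρ b` bounds `ρ` on
`[a, b]`; the case `F < -m` is the mirror image.
-/

open Set MeasureTheory

section Trajectory

variable {F g : ℝ → ℝ} {c d m : ℝ}

theorem add_mul_le_of_hasDerivAt_of_lt (hm : 0 < m) (hg0 : g 0 = c)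
    (hg : ∀ t, 0 ≤ t → HasDerivAt g (F (g t)) t) (hF : ∀ x ∈ Icc c d, m < F x) :
    ∀ t ∈ Icc 0 ((d - c) / m), c + m * t ≤ g t := by
  have hline (t : ℝ) : HasDerivAt (fun t => c + m * t) m t := by
    simpa using ((hasDerivAt_id t).const_mul m).const_add c
  -- where the line touches `g`, it lies in `[c, d]`, so there `g` is strictly steeper
  refine image_le_of_deriv_right_lt_deriv_boundary' (f' := fun _ => m) (by fun_prop)
    (fun t _ => (hline t).hasDerivWithinAt) (by simp [hg0])
    (fun t ht => (hg t ht.1).continuousAt.continuousWithinAt)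
    (fun t ht => (hg t ht.1).hasDerivWithinAt) fun t ht hgt => hF _ ⟨?_, ?_⟩
  · nlinarith [ht.1]
  · rw [← hgt]
    have := (lt_div_iff₀' hm).1 ht.2
    linarith

theorem exists_hitTime_of_lt {a b x y : ℝ} (hm : 0 < m) (hF : ∀ z ∈ Icc a b, m < F z)
    (hax : a ≤ x) (hxy : x ≤ y) (hyb : y ≤ b) (hg0 : g 0 = x)
    (hg : ∀ t, 0 ≤ t → HasDerivAt g (F (g t)) t) :
    ∃ τ ∈ Icc 0 ((b - a) / m), g τ = y ∧ MapsTo g (Icc 0 τ) (Icc a b) := by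
  set T := (y - x) / m
  have hT : 0 ≤ T := div_nonneg (sub_nonneg.2 hxy) hm.le
  have hgc : ContinuousOn g (Icc 0 T) := fun t ht => (hg t ht.1).continuousAt.continuousWithinAt
  have hlin := add_mul_le_of_hasDerivAt_of_lt hm hg0 hg fun z hz =>
    hF z ⟨hax.trans hz.1, hz.2.trans hyb⟩
  have hgT : y ≤ g T := by
    simpa [T, mul_div_cancel₀ _ hm.ne'] using hlin T ⟨hT, le_rfl⟩
  obtain ⟨τ, ⟨hτT, hgτ⟩, hτ_first⟩ : ∃ τ, IsLeast (Icc 0 T ∩ g ⁻¹' {y}) τ := by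
    refine (isCompact_Icc.of_isClosed_subset (hgc.preimage_isClosed_of_isClosed isClosed_Icc
      isClosed_singleton) inter_subset_left).exists_isLeast ?_
    obtain ⟨t, ht, hgt⟩ := intermediate_value_Icc hT hgc ⟨hg0 ▸ hxy, hgT⟩
    exact ⟨t, ht, hgt⟩
  refine ⟨τ, ⟨hτT.1, hτT.2.trans ?_⟩, hgτ, fun s hs => ⟨?_, ?_⟩⟩
  · exact div_le_div_of_nonneg_right (by linarith) hm.le
  · have := hlin s ⟨hs.1, hs.2.trans hτT.2⟩
    nlinarith [hs.1]
  · -- an overshoot `g s > y` before `τ` would give an earlier hitting time by the IVT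
    refine le_trans ?_ hyb
    by_contra! hys
    have hsT : s ≤ T := hs.2.trans hτT.2
    obtain ⟨r, hr, hgr⟩ := intermediate_value_Icc hs.1 (hgc.mono (Icc_subset_Icc_right hsT))
      ⟨hg0 ▸ hxy, hys.le⟩
    have hτr := hτ_first ⟨⟨hr.1, hr.2.trans hsT⟩, hgr⟩
    obtain rfl : r = s := le_antisymm hr.2 (hs.2.trans hτr)
    exact hys.ne' hgr

theorem exists_hitTime_of_lt_neg {a b x y : ℝ} (hm : 0 < m) (hF : ∀ z ∈ Icc a b, F z < -m)
    (hay : a ≤ y) (hyx : y ≤ x) (hxb : x ≤ b) (hg0 : g 0 = x)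
    (hg : ∀ t, 0 ≤ t → HasDerivAt g (F (g t)) t) :
    ∃ τ ∈ Icc 0 ((b - a) / m), g τ = y ∧ MapsTo g (Icc 0 τ) (Icc a b) := by
  obtain ⟨τ, hτ, hgτ, hmaps⟩ :=
    exists_hitTime_of_lt (F := fun u => -F (-u)) (g := fun t => -g t) hm
      (fun z hz => lt_neg.1 (hF _ ⟨le_neg.2 hz.2, neg_le.1 hz.1⟩)) (neg_le_neg hxb)
      (neg_le_neg hyx) (neg_le_neg hay) (by simp [hg0])
      fun t ht => by rw [neg_neg]; exact (hg t ht).neg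
  refine ⟨τ, by simpa [sub_eq_neg_add, add_comm] using hτ, neg_inj.1 hgτ, fun s hs => ?_⟩
  have : -g s ∈ Icc (-b) (-a) := hmaps hs
  exact ⟨neg_le_neg_iff.1 this.2, neg_le_neg_iff.1 this.1⟩

end Trajectory

theorem IsCompact.exists_pos_lt_or_lt_neg {s : Set ℝ} {F : ℝ → ℝ} (hs : IsCompact s)
    (hs' : IsPreconnected s) (hF : ContinuousOn F s) (hF0 : ∀ x ∈ s, F x ≠ 0) :
    ∃ m, 0 < m ∧ ((∀ x ∈ s, m < F x) ∨ ∀ x ∈ s, F x < -m) := by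
  obtain ⟨m, hm, hle⟩ := hs.exists_forall_le' hF.abs fun x hx => abs_pos.2 (hF0 x hx)
  have hsign : F '' s ⊆ Ioi 0 ∨ F '' s ⊆ Iio 0 :=
    (hs'.image F hF).subset_or_subset isOpen_Ioi isOpen_Iio (Ioi_disjoint_Iio_same)
      (by rintro _ ⟨x, hx, rfl⟩; exact (hF0 x hx).lt_or_gt.symm)
  refine ⟨m / 2, half_pos hm, hsign.imp (fun hpos x hx => ?_) fun hneg x hx => ?_⟩
  · have := hle x hx
    rw [abs_of_pos (hpos (mem_image_of_mem F hx))] at this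
    linarith
  · have := hle x hx
    rw [abs_of_neg (hneg (mem_image_of_mem F hx))] at this
    linarith

theorem abs_integral_le_mul_of_abs_le {f : ℝ → ℝ} {τ H : ℝ} (hτ : 0 ≤ τ)
    (hf : ∀ s ∈ Icc 0 τ, |f s| ≤ H) : |∫ s in 0..τ, f s| ≤ H * τ := by
  simpa [abs_of_nonneg hτ] using intervalIntegral.norm_integral_le_of_norm_le_const (f := f)
    fun s hs => (Real.norm_eq_abs _).trans_le (hf s (Ioc_subset_Icc_self (uIoc_of_le hτ ▸ hs)))

theorem le_mul_exp_of_exp_integral_le {f k : ℝ → ℝ} {p M ω H L τ T q r : ℝ} (hp : 0 ≤ p)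
    (hM : 0 ≤ M) (hr : 0 ≤ r) (hτ : τ ∈ Icc 0 T) (hf : ∀ s ∈ Icc 0 τ, |f s| ≤ H)
    (hk : ∀ s ∈ Icc 0 τ, |k s| ≤ L)
    (h : Real.exp (p * ∫ s in 0..τ, f s) * q ≤
      M * Real.exp (ω * τ) * r * Real.exp (∫ s in 0..τ, k s)) :
    q ≤ M * Real.exp ((|ω| + L + p * H) * T) * r := by
  set I := ∫ s in 0..τ, f s
  set J := ∫ s in 0..τ, k s
  have hI := abs_integral_le_mul_of_abs_le hτ.1 hf
  have hJ := abs_integral_le_mul_of_abs_le hτ.1 hk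
  have hH : 0 ≤ H := (abs_nonneg _).trans (hf 0 ⟨le_rfl, hτ.1⟩)
  have hL : 0 ≤ L := (abs_nonneg _).trans (hk 0 ⟨le_rfl, hτ.1⟩)
  have hexp : ω * τ + J - p * I ≤ (|ω| + L + p * H) * T := calc
    ω * τ + J - p * I ≤ (|ω| + L + p * H) * τ := by
      have := neg_abs_le I
      nlinarith [le_abs_self ω, le_abs_self J, hτ.1]
    _ ≤ (|ω| + L + p * H) * T := by gcongr; exact hτ.2
  calc q = Real.exp (-(p * I)) * (Real.exp (p * I) * q) := by
        rw [← mul_assoc, ← Real.exp_add, neg_add_cancel, Real.exp_zero, one_mul]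
    _ ≤ Real.exp (-(p * I)) * (M * Real.exp (ω * τ) * r * Real.exp J) := by gcongr
    _ = M * Real.exp (ω * τ + J - p * I) * r := by
        rw [sub_eq_add_neg, Real.exp_add, Real.exp_add]; ring
    _ ≤ M * Real.exp ((|ω| + L + p * H) * T) * r := by gcongr

theorem exists_inv_le_and_le_of_le_mul {ρ : ℝ → ℝ} {s : Set ℝ} {u v D : ℝ} (hu : 0 < ρ u)
    (hD : 0 < D) (h : ∀ x ∈ s, ρ u ≤ D * ρ x ∧ ρ x ≤ D * ρ v) :
    ∃ C, 0 < C ∧ ∀ x ∈ s, C⁻¹ ≤ ρ x ∧ ρ x ≤ C := by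
  refine ⟨max (D / ρ u) (D * ρ v), (div_pos hD hu).trans_le (le_max_left _ _),
    fun x hx => ⟨?_, ?_⟩⟩
  · calc (max (D / ρ u) (D * ρ v))⁻¹
        ≤ (D / ρ u)⁻¹ := inv_anti₀ (div_pos hD hu) (le_max_left _ _)
      _ = ρ u / D := inv_div _ _
      _ ≤ ρ x := (div_le_iff₀' hD).2 (h x hx).1
  · exact (h x hx).2.trans (le_max_right _ _)

theorem rho_bounded_on_compact_general (Ω : Set ℝ) (hΩ : IsOpen Ω)
    (F : ℝ → ℝ) (hF : ContDiffOn ℝ 1 F Ω)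
    (φ : ℝ → ℝ → ℝ)
    (hφ0 : ∀ y ∈ Ω, φ 0 y = y)
    (hφ' : ∀ y ∈ Ω, ∀ t : ℝ, 0 ≤ t → HasDerivAt (fun s => φ s y) (F (φ t y)) t)
    (a b : ℝ) (hab : a ≤ b) (hIcc : Icc a b ⊆ Ω \ {y | F y = 0})
    (h : ℝ → ℝ) (hh : ContinuousOn h Ω)
    (ρ : ℝ → ℝ) (hρpos : ∀ y ∈ Ω, 0 < ρ y)
    (p : ℝ) (hp : 1 ≤ p)
    -- `ρ` is `p`-admissible for `F` and `h`
    (hadm : ∃ M : ℝ, 1 ≤ M ∧ ∃ ω : ℝ, ∀ t : ℝ, 0 ≤ t → ∀ y ∈ Ω,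
      Real.exp (p * ∫ s in (0:ℝ)..t, h (φ s y)) * ρ y ≤
        M * Real.exp (ω * t) * ρ (φ t y) *
          Real.exp (∫ s in (0:ℝ)..t, deriv F (φ s y))) :
    ∃ C : ℝ, 0 < C ∧ ∀ x ∈ Icc a b, C⁻¹ ≤ ρ x ∧ ρ x ≤ C := by
  obtain ⟨M, hM, ω, hadm⟩ := hadm
  have hsub : Icc a b ⊆ Ω := fun x hx => (hIcc hx).1
  have ha : a ∈ Icc a b := left_mem_Icc.2 hab
  have hb : b ∈ Icc a b := right_mem_Icc.2 hab
  obtain ⟨H, hH⟩ := isCompact_Icc.exists_bound_of_continuousOn (hh.mono hsub)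
  obtain ⟨L, hL⟩ := isCompact_Icc.exists_bound_of_continuousOn
    ((hF.continuousOn_deriv_of_isOpen hΩ le_rfl).mono hsub)
  obtain ⟨m, hm, hsign⟩ := isCompact_Icc.exists_pos_lt_or_lt_neg isPreconnected_Icc
    (hF.continuousOn.mono hsub) fun x hx => (hIcc hx).2
  set D := M * Real.exp ((|ω| + L + p * H) * ((b - a) / m))
  have hD : 0 < D := by positivity
  have transport : ∀ x ∈ Icc a b, ∀ y, (∃ τ ∈ Icc 0 ((b - a) / m), φ τ x = y ∧
      MapsTo (φ · x) (Icc 0 τ) (Icc a b)) → ρ x ≤ D * ρ y := by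
    rintro x hx _ ⟨τ, hτ, rfl, hmaps⟩
    exact le_mul_exp_of_exp_integral_le (by linarith) (by linarith)
      (hρpos _ (hsub (hmaps ⟨hτ.1, le_rfl⟩))).le hτ (fun s hs => hH _ (hmaps hs))
      (fun s hs => hL _ (hmaps hs)) (hadm τ hτ.1 x (hsub hx))
  rcases hsign with hpos | hneg
  · refine exists_inv_le_and_le_of_le_mul (hρpos a (hsub ha)) hD fun x hx =>
      ⟨transport a ha x ?_, transport x hx b ?_⟩
    · exact exists_hitTime_of_lt hm hpos le_rfl hx.1 hx.2 (hφ0 a (hsub ha)) (hφ' a (hsub ha))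
    · exact exists_hitTime_of_lt hm hpos hx.1 hx.2 le_rfl (hφ0 x (hsub hx))
        (hφ' x (hsub hx))
  · refine exists_inv_le_and_le_of_le_mul (hρpos b (hsub hb)) hD fun x hx =>
      ⟨transport b hb x ?_, transport x hx a ?_⟩
    · exact exists_hitTime_of_lt_neg hm hneg hx.1 hx.2 le_rfl (hφ0 b (hsub hb))
        (hφ' b (hsub hb))
    · exact exists_hitTime_of_lt_neg hm hneg le_rfl hx.1 hx.2 (hφ0 x (hsub hx))
        (hφ' x (hsub hx))

/-- If `ρ` is `p`-admissible for `F` and a real-valued `h ∈ C(Ω)` and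
`[a,b] ⊂ Ω \ {F = 0}` is compact, then there is `C > 0` with `C⁻¹ ≤ ρ(x) ≤ C` on
`[a,b]`. -/
theorem rho_bounded_on_compact (Ω : Set ℝ) (hΩ : IsOpen Ω)
    (F : ℝ → ℝ) (hF : ContDiffOn ℝ 1 F Ω)
    (φ : ℝ → ℝ → ℝ)
    (hφ0 : ∀ y ∈ Ω, φ 0 y = y)
    (hφΩ : ∀ y ∈ Ω, ∀ t : ℝ, 0 ≤ t → φ t y ∈ Ω)
    (hφ' : ∀ y ∈ Ω, ∀ t : ℝ, 0 ≤ t → HasDerivAt (fun s => φ s y) (F (φ t y)) t)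
    (a b : ℝ) (hab : a ≤ b) (hIcc : Icc a b ⊆ Ω \ {y | F y = 0})
    (h : ℝ → ℝ) (hh : ContinuousOn h Ω)
    (ρ : ℝ → ℝ) (hρm : Measurable ρ) (hρpos : ∀ y ∈ Ω, 0 < ρ y)
    (p : ℝ) (hp : 1 ≤ p)
    -- `ρ` is `p`-admissible for `F` and `h`
    (hadm : ∃ M : ℝ, 1 ≤ M ∧ ∃ ω : ℝ, ∀ t : ℝ, 0 ≤ t → ∀ y ∈ Ω,
      Real.exp (p * ∫ s in (0:ℝ)..t, h (φ s y)) * ρ y ≤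
        M * Real.exp (ω * t) * ρ (φ t y) *
          Real.exp (∫ s in (0:ℝ)..t, deriv F (φ s y))) :
    ∃ C : ℝ, 0 < C ∧ ∀ x ∈ Icc a b, C⁻¹ ≤ ρ x ∧ ρ x ≤ C :=
  rho_bounded_on_compact_general Ω hΩ F hF φ hφ0 hφ' a b hab hIcc h hh ρ hρpos p hp hadm
end
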